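/- For every permutation σ of [n], sgn(σ) = (−1)^{cval(σ)+cdrise(σ)+cdfall(σ)+ucross(σ)+lcross(σ)}, i.e. the sign of σ is determined by the parities of the excedance-type statistics and the crossings. -/

import Mathlib

/-!
Since `sign σ = (-1) ^ inv σ`, it suffices to prove the exact identity
`inv = cval + cdrise + cdfall + ucross + lcross + 2 (unest + lnest + psnest)`.

Draw an arc `a ↦ σ a` for every `a`. The height of the gap below `x` is the number of arcs passing
over it; it is the same whether upward or downward arcs are counted, since `σ` is a bijection.
The inversions `a < b` that are not nestings are exactly those with `a ≤ σ a` and `σ b < b`, and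
they add up to the total height. The pairs of `upperOverlap` and `lowerOverlap`, which are the
crossings, the nestings and the `cdrise` and `cdfall` points, add up to the total height minus
`cpeak`. As there are as many cyclic peaks as cyclic valleys, the identity follows.
-/

open Finset

def fixCt {n : ℕ} (σ : Equiv.Perm (Fin n)) : ℕ :=
  (univ.filter fun i => σ i = i).card

def cpeakCt {n : ℕ} (σ : Equiv.Perm (Fin n)) : ℕ :=
  (univ.filter fun i => σ⁻¹ i < i ∧ σ i < i).card

def cvalCt {n : ℕ} (σ : Equiv.Perm (Fin n)) : ℕ :=
  (univ.filter fun i => i < σ⁻¹ i ∧ i < σ i).card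

def cdriseCt {n : ℕ} (σ : Equiv.Perm (Fin n)) : ℕ :=
  (univ.filter fun i => σ⁻¹ i < i ∧ i < σ i).card

def cdfallCt {n : ℕ} (σ : Equiv.Perm (Fin n)) : ℕ :=
  (univ.filter fun i => i < σ⁻¹ i ∧ σ i < i).card

def ucrossCt {n : ℕ} (σ : Equiv.Perm (Fin n)) : ℕ :=
  (univ.filter fun p : Fin n × Fin n × Fin n × Fin n =>
    p.1 < p.2.1 ∧ p.2.1 < p.2.2.1 ∧ p.2.2.1 < p.2.2.2 ∧
    p.2.2.1 = σ p.1 ∧ p.2.2.2 = σ p.2.1).card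

def lcrossCt {n : ℕ} (σ : Equiv.Perm (Fin n)) : ℕ :=
  (univ.filter fun p : Fin n × Fin n × Fin n × Fin n =>
    p.1 < p.2.1 ∧ p.2.1 < p.2.2.1 ∧ p.2.2.1 < p.2.2.2 ∧
    p.1 = σ p.2.2.1 ∧ p.2.1 = σ p.2.2.2).card

def unestCt {n : ℕ} (σ : Equiv.Perm (Fin n)) : ℕ :=
  (univ.filter fun p : Fin n × Fin n × Fin n × Fin n =>
    p.1 < p.2.1 ∧ p.2.1 < p.2.2.1 ∧ p.2.2.1 < p.2.2.2 ∧
    p.2.2.2 = σ p.1 ∧ p.2.2.1 = σ p.2.1).card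

def lnestCt {n : ℕ} (σ : Equiv.Perm (Fin n)) : ℕ :=
  (univ.filter fun p : Fin n × Fin n × Fin n × Fin n =>
    p.1 < p.2.1 ∧ p.2.1 < p.2.2.1 ∧ p.2.2.1 < p.2.2.2 ∧
    p.1 = σ p.2.2.2 ∧ p.2.1 = σ p.2.2.1).card

def psnestCt {n : ℕ} (σ : Equiv.Perm (Fin n)) : ℕ :=
  (univ.filter fun p : Fin n × Fin n × Fin n =>
    p.1 < p.2.1 ∧ p.2.1 < p.2.2 ∧ σ p.2.1 = p.2.1 ∧ σ p.1 = p.2.2).card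

def invCt {n : ℕ} (σ : Equiv.Perm (Fin n)) : ℕ :=
  (univ.filter fun p : Fin n × Fin n => p.1 < p.2 ∧ σ p.2 < σ p.1).card

/-- Number of cycles of a permutation, counting fixed points as cycles. -/
def cycCt {n : ℕ} (σ : Equiv.Perm (Fin n)) : ℕ :=
  σ.cycleType.card + fixCt σ

def ucrossAt {n : ℕ} (σ : Equiv.Perm (Fin n)) (j : Fin n) : ℕ :=
  (univ.filter fun p : Fin n × Fin n × Fin n =>
    p.1 < j ∧ j < p.2.1 ∧ p.2.1 < p.2.2 ∧ p.2.1 = σ p.1 ∧ p.2.2 = σ j).card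

def unestAt {n : ℕ} (σ : Equiv.Perm (Fin n)) (j : Fin n) : ℕ :=
  (univ.filter fun p : Fin n × Fin n × Fin n =>
    p.1 < j ∧ j < p.2.1 ∧ p.2.1 < p.2.2 ∧ p.2.1 = σ j ∧ p.2.2 = σ p.1).card

def lcrossAt {n : ℕ} (σ : Equiv.Perm (Fin n)) (k : Fin n) : ℕ :=
  (univ.filter fun p : Fin n × Fin n × Fin n =>
    p.1 < p.2.1 ∧ p.2.1 < k ∧ k < p.2.2 ∧ p.1 = σ k ∧ p.2.1 = σ p.2.2).card

def lnestAt {n : ℕ} (σ : Equiv.Perm (Fin n)) (k : Fin n) : ℕ :=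
  (univ.filter fun p : Fin n × Fin n × Fin n =>
    p.1 < p.2.1 ∧ p.2.1 < k ∧ k < p.2.2 ∧ p.1 = σ p.2.2 ∧ p.2.1 = σ k).card

/-- `i` is a record (left-to-right maximum) of `σ`. -/
def IsRecord {n : ℕ} (σ : Equiv.Perm (Fin n)) (i : Fin n) : Prop :=
  ∀ j, j < i → σ j < σ i

/-- `i` is an antirecord (right-to-left minimum) of `σ`. -/
def IsAntirecord {n : ℕ} (σ : Equiv.Perm (Fin n)) (i : Fin n) : Prop :=
  ∀ j, i < j → σ i < σ j

def ujoinCt {n : ℕ} (σ : Equiv.Perm (Fin n)) : ℕ :=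
  (univ.filter fun p : Fin n × Fin n × Fin n =>
    p.1 < p.2.1 ∧ p.2.1 < p.2.2 ∧ p.2.1 = σ p.1 ∧ p.2.2 = σ p.2.1).card

def ljoinCt {n : ℕ} (σ : Equiv.Perm (Fin n)) : ℕ :=
  (univ.filter fun p : Fin n × Fin n × Fin n =>
    p.1 < p.2.1 ∧ p.2.1 < p.2.2 ∧ p.1 = σ p.2.1 ∧ p.2.1 = σ p.2.2).card

open Equiv

def iverson (p : Prop) [Decidable p] : ℤ := if p then 1 else 0

section Counting

variable {α : Type*} [Fintype α]

theorem natCast_card_filter_eq_sum_iverson (p : α → Prop) [DecidablePred p] :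
    (#{x | p x} : ℤ) = ∑ x, iverson (p x) :=
  natCast_card_filter _ _

theorem natCast_card_filter_prod_eq_sum_sum_iverson {β : Type*} [Fintype β]
    (P : α → β → Prop) [∀ a b, Decidable (P a b)] :
    (#{p : α × β | P p.1 p.2} : ℤ) = ∑ a, ∑ b, iverson (P a b) := by
  rw [natCast_card_filter, ← univ_product_univ, sum_product]; rfl

theorem sum_iverson_eq_and [DecidableEq α] (c : α) (P : α → Prop) [DecidablePred P] :
    ∑ x, iverson (x = c ∧ P x) = iverson (P c) := by
  simp [iverson, ite_and]

theorem Equiv.Perm.sum_iverson_apply_eq_and [DecidableEq α] (σ : Perm α) (c : α) (P : α → Prop)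
    [DecidablePred P] : ∑ x, iverson (σ x = c ∧ P x) = iverson (P (σ⁻¹ c)) := by
  rw [← Equiv.sum_comp σ⁻¹]
  simp only [Perm.coe_inv, apply_symm_apply]
  exact sum_iverson_eq_and _ _

theorem Equiv.Perm.sum_iverson_exit_eq_sum_iverson_entry (σ : Perm α) (p : α → Prop)
    [DecidablePred p] :
    ∑ c, iverson (p c ∧ ¬ p (σ c)) = ∑ c, iverson (¬ p c ∧ p (σ c)) := by
  have hsrc : ∀ c, iverson (p c) = iverson (p c ∧ p (σ c)) + iverson (p c ∧ ¬ p (σ c)) := by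
    intro c; unfold iverson; split_ifs <;> simp_all
  have htgt : ∀ c, iverson (p (σ c)) = iverson (p c ∧ p (σ c)) + iverson (¬ p c ∧ p (σ c)) := by
    intro c; unfold iverson; split_ifs <;> simp_all
  have hσ : ∑ c, iverson (p (σ c)) = ∑ c, iverson (p c) := Equiv.sum_comp σ fun c => iverson (p c)
  rw [sum_congr rfl fun c _ => htgt c, sum_congr rfl fun c _ => hsrc c, sum_add_distrib,
    sum_add_distrib] at hσ
  linarith

theorem sum_sum_eq_zero_of_add_swap_eq_zero (g : α → α → ℤ) (hg : ∀ a b, g a b + g b a = 0) :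
    ∑ a, ∑ b, g a b = 0 := by
  have h : ∑ a, ∑ b, (g a b + g b a) = 0 := by simp only [hg, sum_const_zero]
  have hswap : ∑ a, ∑ b, g b a = ∑ a, ∑ b, g a b := sum_comm
  simp only [sum_add_distrib] at h
  linarith

end Counting

theorem sign_eq_neg_one_pow_invCt {n : ℕ} (σ : Perm (Fin n)) :
    Perm.sign σ = (-1) ^ invCt σ := by
  rw [σ.sign_eq_prod_prod_Ioi]
  simp_rw [prod_ite, prod_const_one, one_mul, prod_const, prod_pow_eq_pow_sum]
  rw [invCt, card_filter, ← univ_product_univ, sum_product]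
  refine congrArg _ (sum_congr rfl fun i _ => ?_)
  rw [card_filter, ← filter_lt_eq_Ioi, sum_filter]
  refine sum_congr rfl fun j _ => ?_
  have : i ≠ j → σ i ≠ σ j := σ.injective.ne
  dsimp only
  split_ifs <;> omega

section PairSums

variable {n : ℕ} (σ : Perm (Fin n))

theorem invCt_eq_sum : (invCt σ : ℤ) = ∑ a, ∑ b, iverson (a < b ∧ σ b < σ a) :=
  natCast_card_filter_prod_eq_sum_sum_iverson fun a b => a < b ∧ σ b < σ a

theorem cvalCt_eq_sum : (cvalCt σ : ℤ) = ∑ x, iverson (x < σ⁻¹ x ∧ x < σ x) :=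
  natCast_card_filter_eq_sum_iverson _

theorem cpeakCt_eq_sum : (cpeakCt σ : ℤ) = ∑ x, iverson (σ⁻¹ x < x ∧ σ x < x) :=
  natCast_card_filter_eq_sum_iverson _

theorem cdriseCt_eq_sum : (cdriseCt σ : ℤ) = ∑ a, ∑ b, iverson (a < b ∧ σ a = b ∧ b < σ b) := by
  rw [← natCast_card_filter_prod_eq_sum_sum_iverson, cdriseCt]
  congr 1
  refine card_nbij' (fun x => (σ⁻¹ x, x)) (fun p => p.2) ?_ ?_ ?_ ?_ <;> intro p <;>
    simp only [coe_filter, mem_univ, true_and, Set.mem_ofPred_eq, Perm.coe_inv,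
      apply_symm_apply] <;> grind

theorem cdfallCt_eq_sum : (cdfallCt σ : ℤ) = ∑ a, ∑ b, iverson (a < b ∧ σ b = a ∧ σ a < a) := by
  rw [← natCast_card_filter_prod_eq_sum_sum_iverson, cdfallCt]
  congr 1
  refine card_nbij' (fun x => (x, σ⁻¹ x)) (fun p => p.1) ?_ ?_ ?_ ?_ <;> intro p <;>
    simp only [coe_filter, mem_univ, true_and, Set.mem_ofPred_eq, Perm.coe_inv,
      apply_symm_apply] <;> grind

theorem ucrossCt_eq_sum :
    (ucrossCt σ : ℤ) = ∑ a, ∑ b, iverson (a < b ∧ b < σ a ∧ σ a < σ b) := by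
  rw [← natCast_card_filter_prod_eq_sum_sum_iverson, ucrossCt]
  congr 1
  refine card_nbij' (fun p => (p.1, p.2.1)) (fun p => (p.1, p.2, σ p.1, σ p.2))
    ?_ ?_ ?_ ?_ <;> intro p <;>
    simp only [coe_filter, mem_univ, true_and, Set.mem_ofPred_eq] <;> grind

theorem unestCt_eq_sum :
    (unestCt σ : ℤ) = ∑ a, ∑ b, iverson (a < b ∧ b < σ b ∧ σ b < σ a) := by
  rw [← natCast_card_filter_prod_eq_sum_sum_iverson, unestCt]
  congr 1
  refine card_nbij' (fun p => (p.1, p.2.1)) (fun p => (p.1, p.2, σ p.2, σ p.1))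
    ?_ ?_ ?_ ?_ <;> intro p <;>
    simp only [coe_filter, mem_univ, true_and, Set.mem_ofPred_eq] <;> grind

theorem lcrossCt_eq_sum :
    (lcrossCt σ : ℤ) = ∑ a, ∑ b, iverson (σ a < σ b ∧ σ b < a ∧ a < b) := by
  rw [← natCast_card_filter_prod_eq_sum_sum_iverson, lcrossCt]
  congr 1
  refine card_nbij' (fun p => (p.2.2.1, p.2.2.2)) (fun p => (σ p.1, σ p.2, p.1, p.2))
    ?_ ?_ ?_ ?_ <;> intro p <;>
    simp only [coe_filter, mem_univ, true_and, Set.mem_ofPred_eq] <;> grind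

theorem lnestCt_eq_sum :
    (lnestCt σ : ℤ) = ∑ a, ∑ b, iverson (σ b < σ a ∧ σ a < a ∧ a < b) := by
  rw [← natCast_card_filter_prod_eq_sum_sum_iverson, lnestCt]
  congr 1
  refine card_nbij' (fun p => (p.2.2.1, p.2.2.2)) (fun p => (σ p.2, σ p.1, p.1, p.2))
    ?_ ?_ ?_ ?_ <;> intro p <;>
    simp only [coe_filter, mem_univ, true_and, Set.mem_ofPred_eq] <;> grind

theorem psnestCt_eq_sum :
    (psnestCt σ : ℤ) = ∑ a, ∑ b, iverson (a < b ∧ b < σ a ∧ σ b = b) := by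
  rw [← natCast_card_filter_prod_eq_sum_sum_iverson, psnestCt]
  congr 1
  refine card_nbij' (fun p => (p.1, p.2.1)) (fun p => (p.1, p.2, σ p.1)) ?_ ?_ ?_ ?_ <;> intro p <;>
    simp only [coe_filter, mem_univ, true_and, Set.mem_ofPred_eq] <;> grind

end PairSums

theorem cvalCt_eq_cpeakCt {n : ℕ} (σ : Perm (Fin n)) : cvalCt σ = cpeakCt σ := by
  have hfix : ∀ x, σ⁻¹ x = x ↔ σ x = x := fun x => by rw [Perm.inv_eq_iff_eq, eq_comm]
  have hup : ∑ x, iverson (x < σ x) = (cvalCt σ : ℤ) + cdriseCt σ := by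
    rw [cvalCt_eq_sum, cdriseCt, natCast_card_filter_eq_sum_iverson, ← sum_add_distrib]
    refine sum_congr rfl fun x _ => ?_
    have := hfix x
    unfold iverson; split_ifs <;> omega
  have hdown : ∑ x, iverson (σ⁻¹ x < x) = (cdriseCt σ : ℤ) + cpeakCt σ := by
    rw [cpeakCt_eq_sum, cdriseCt, natCast_card_filter_eq_sum_iverson, ← sum_add_distrib]
    refine sum_congr rfl fun x _ => ?_
    have := hfix x
    unfold iverson; split_ifs <;> omega
  have hσ : ∑ x, iverson (x < σ x) = ∑ x, iverson (σ⁻¹ x < x) := by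
    rw [← Equiv.sum_comp σ fun x => iverson (σ⁻¹ x < x)]
    simp only [Perm.coe_inv, symm_apply_apply]
  omega

section Heights

variable {α : Type*} [Fintype α] [LinearOrder α] (σ : Perm α)

def heightBelow (x : α) : ℤ := ∑ c, iverson (c < x ∧ x ≤ σ c)

def heightAbove (x : α) : ℤ := ∑ c, iverson (c ≤ x ∧ x < σ c)

theorem heightBelow_eq_sum_down (x : α) : heightBelow σ x = ∑ c, iverson (σ c < x ∧ x ≤ c) := by
  have := σ.sum_iverson_exit_eq_sum_iverson_entry (· < x)
  simp only [not_lt] at this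
  rw [heightBelow, this]
  simp only [and_comm]

theorem heightAbove_eq_sum_down (x : α) : heightAbove σ x = ∑ c, iverson (σ c ≤ x ∧ x < c) := by
  have := σ.sum_iverson_exit_eq_sum_iverson_entry (· ≤ x)
  simp only [not_le] at this
  rw [heightAbove, this]
  simp only [and_comm]

end Heights

section Decomposition

variable {n : ℕ} (σ : Perm (Fin n))

def upDownInv : ℤ := ∑ a, ∑ b, iverson (a < b ∧ a ≤ σ a ∧ σ b < b ∧ σ b < σ a)

def upperOverlap : ℤ := ∑ a, ∑ b, iverson (a < b ∧ b ≤ σ a ∧ b ≤ σ b)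

def lowerOverlap : ℤ := ∑ a, ∑ b, iverson (a < b ∧ σ a < a ∧ σ b ≤ a)

theorem invCt_eq_upDownInv_add :
    (invCt σ : ℤ) = upDownInv σ + unestCt σ + lnestCt σ + psnestCt σ := by
  rw [invCt_eq_sum, upDownInv, unestCt_eq_sum, lnestCt_eq_sum, psnestCt_eq_sum]
  simp only [← sum_add_distrib]
  refine sum_congr rfl fun a _ => sum_congr rfl fun b _ => ?_
  have := σ.injective.eq_iff (a := a) (b := b)
  unfold iverson; split_ifs <;> omega

theorem upperOverlap_eq :
    upperOverlap σ = ucrossCt σ + unestCt σ + psnestCt σ + cdriseCt σ := by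
  rw [upperOverlap, ucrossCt_eq_sum, unestCt_eq_sum, psnestCt_eq_sum, cdriseCt_eq_sum]
  simp only [← sum_add_distrib]
  refine sum_congr rfl fun a _ => sum_congr rfl fun b _ => ?_
  have := σ.injective.eq_iff (a := a) (b := b)
  unfold iverson; split_ifs <;> omega

theorem lowerOverlap_eq : lowerOverlap σ = lcrossCt σ + lnestCt σ + cdfallCt σ := by
  rw [lowerOverlap, lcrossCt_eq_sum, lnestCt_eq_sum, cdfallCt_eq_sum]
  simp only [← sum_add_distrib]
  refine sum_congr rfl fun a _ => sum_congr rfl fun b _ => ?_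
  have := σ.injective.eq_iff (a := a) (b := b)
  unfold iverson; split_ifs <;> omega

theorem upperOverlap_eq_sum_heightBelow :
    upperOverlap σ = ∑ b, iverson (b ≤ σ b) * heightBelow σ b := by
  rw [upperOverlap, sum_comm]
  refine sum_congr rfl fun b _ => ?_
  rw [heightBelow, mul_sum]
  refine sum_congr rfl fun a _ => ?_
  unfold iverson; split_ifs <;> omega

theorem lowerOverlap_eq_sum_heightBelow :
    lowerOverlap σ = ∑ a, iverson (σ a < a) * heightBelow σ a - cpeakCt σ := by
  rw [lowerOverlap, cpeakCt_eq_sum, ← sum_sub_distrib]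
  refine sum_congr rfl fun a _ => ?_
  have hsplit : ∀ b, iverson (a < b ∧ σ a < a ∧ σ b ≤ a) =
      iverson (σ a < a) * iverson (σ b < a ∧ a ≤ b) - iverson (b = a ∧ σ a < a) +
        iverson (σ b = a ∧ σ a < a ∧ a < b) := by
    intro b
    have := σ.injective.eq_iff (a := a) (b := b)
    unfold iverson; split_ifs <;> omega
  rw [sum_congr rfl fun b _ => hsplit b, sum_add_distrib, sum_sub_distrib, ← mul_sum,
    ← heightBelow_eq_sum_down, sum_iverson_eq_and, σ.sum_iverson_apply_eq_and]
  have : σ⁻¹ a = a ↔ σ a = a := by rw [Perm.inv_eq_iff_eq, eq_comm]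
  unfold iverson; split_ifs <;> omega

/-- Of two lower arcs, a crossing pair is counted once on each side, any other pair equally often
on both sides. -/
theorem sum_heightAbove_apply_eq_sum_heightBelow :
    ∑ b, iverson (σ b < b) * heightAbove σ (σ b) = ∑ b, iverson (σ b < b) * heightBelow σ b := by
  rw [← sub_eq_zero, ← sum_sub_distrib]
  simp_rw [heightAbove_eq_sum_down, heightBelow_eq_sum_down, ← mul_sub, ← sum_sub_distrib,
    mul_sum]
  refine sum_sum_eq_zero_of_add_swap_eq_zero _ fun b c => ?_
  have := σ.injective.eq_iff (a := b) (b := c)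
  unfold iverson; split_ifs <;> omega

theorem upDownInv_eq_sum_heightBelow : upDownInv σ = ∑ x, heightBelow σ x := by
  have hsplit : ∀ a b, iverson (a < b ∧ a ≤ σ a ∧ σ b < b ∧ σ b < σ a) =
      iverson (σ b < b) * iverson (a ≤ σ b ∧ σ b < σ a) +
        iverson (a ≤ σ a) * iverson (σ b < a ∧ a ≤ b) := by
    intro a b
    have := σ.injective.eq_iff (a := a) (b := b)
    unfold iverson; split_ifs <;> omega
  calc upDownInv σ
      = ∑ b, iverson (σ b < b) * heightAbove σ (σ b) +
          ∑ a, iverson (a ≤ σ a) * heightBelow σ a := by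
        simp_rw [upDownInv, hsplit, sum_add_distrib, heightBelow_eq_sum_down, heightAbove, mul_sum]
        rw [sum_comm]
    _ = ∑ x, heightBelow σ x := by
        rw [sum_heightAbove_apply_eq_sum_heightBelow, ← sum_add_distrib]
        refine sum_congr rfl fun x _ => ?_
        unfold iverson; split_ifs <;> omega

theorem upperOverlap_add_lowerOverlap_add_cpeakCt :
    upperOverlap σ + lowerOverlap σ + cpeakCt σ = ∑ x, heightBelow σ x := by
  rw [upperOverlap_eq_sum_heightBelow, lowerOverlap_eq_sum_heightBelow, ← add_sub_assoc,
    sub_add_cancel, ← sum_add_distrib]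
  refine sum_congr rfl fun x _ => ?_
  unfold iverson; split_ifs <;> omega

end Decomposition

theorem invCt_eq_stats_add_two_mul_nestings {n : ℕ} (σ : Perm (Fin n)) :
    invCt σ = cvalCt σ + cdriseCt σ + cdfallCt σ + ucrossCt σ + lcrossCt σ +
      2 * (unestCt σ + lnestCt σ + psnestCt σ) := by
  zify
  linarith [invCt_eq_upDownInv_add σ, upDownInv_eq_sum_heightBelow σ,
    upperOverlap_add_lowerOverlap_add_cpeakCt σ, upperOverlap_eq σ, lowerOverlap_eq σ,
    cvalCt_eq_cpeakCt σ]

theorem sign_eq_neg_one_pow_stats {n : ℕ} (σ : Equiv.Perm (Fin n)) :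
    Equiv.Perm.sign σ =
      (-1 : ℤˣ) ^ (cvalCt σ + cdriseCt σ + cdfallCt σ + ucrossCt σ + lcrossCt σ) := by
  rw [sign_eq_neg_one_pow_invCt, invCt_eq_stats_add_two_mul_nestings, pow_add, pow_mul,
    neg_one_sq, one_pow, mul_one]
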